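/- Schatten-norm triangle-type bound for marginals implies improved subadditivity: let ρ_AB be a bipartite density operator satisfying ‖ρ_A‖₂ + ‖ρ_B‖₂ ≤ 1 + ‖ρ_AB‖₂ (Audenaert's inequality with q=2), and suppose √(1−S_L(ρ_A)) + √(1−S_L(ρ_B)) ≥ 1. Then S_L(ρ_AB) ≤ S_L(ρ_A) + S_L(ρ_B) − 2(1−√(1−S_L(ρ_A)))(1−√(1−S_L(ρ_B))), and the right-hand side is at most S_L(ρ_A)+S_L(ρ_B). -/

import Mathlib

open Matrix
open scoped ComplexOrder

noncomputable def linEntropy {n : Type*} [Fintype n] (ρ : Matrix n n ℂ) : ℝ :=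
  1 - ((ρ * ρ).trace).re

noncomputable def ptraceB {dA dB : ℕ} (ρ : Matrix (Fin dA × Fin dB) (Fin dA × Fin dB) ℂ) :
    Matrix (Fin dA) (Fin dA) ℂ := fun i j => ∑ k, ρ (i, k) (j, k)

noncomputable def ptraceA {dA dB : ℕ} (ρ : Matrix (Fin dA × Fin dB) (Fin dA × Fin dB) ℂ) :
    Matrix (Fin dB) (Fin dB) ℂ := fun i j => ∑ k, ρ (k, i) (k, j)

section Purity

open RCLike

variable {n 𝕜 : Type*} [Fintype n] [RCLike 𝕜] {A : Matrix n n 𝕜}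

theorem Matrix.IsHermitian.re_trace_mul_self_eq_sum_sq [DecidableEq n] (hA : A.IsHermitian) :
    re (A * A).trace = ∑ i, hA.eigenvalues i ^ 2 := by
  conv_lhs => rw [hA.spectral_theorem, ← map_mul, Unitary.conjStarAlgAut_apply, trace_mul_cycle,
    Unitary.coe_star_mul_self, one_mul, diagonal_mul_diagonal, trace_diagonal]
  simp [sq]

theorem Matrix.IsHermitian.re_trace_mul_self_nonneg (hA : A.IsHermitian) :
    0 ≤ re (A * A).trace := by
  classical
  rw [hA.re_trace_mul_self_eq_sum_sq]
  positivity

theorem Matrix.PosSemidef.re_trace_mul_self_le_sq (hA : A.PosSemidef) :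
    re (A * A).trace ≤ re A.trace ^ 2 := by
  classical
  rw [hA.1.re_trace_mul_self_eq_sum_sq, hA.1.trace_eq_sum_eigenvalues, map_sum]
  simpa using Finset.sum_sq_le_sq_sum_of_nonneg fun i _ => hA.eigenvalues_nonneg i

end Purity

section PartialTrace

variable {dA dB : ℕ} (ρ : Matrix (Fin dA × Fin dB) (Fin dA × Fin dB) ℂ)

theorem ptraceB_eq_sum_submatrix : ptraceB ρ = ∑ k, ρ.submatrix (·, k) (·, k) := by
  ext i j
  simp [ptraceB, Matrix.sum_apply]

theorem ptraceA_eq_sum_submatrix : ptraceA ρ = ∑ k, ρ.submatrix (k, ·) (k, ·) := by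
  ext i j
  simp [ptraceA, Matrix.sum_apply]

variable {ρ}

theorem ptraceB_posSemidef (hρ : ρ.PosSemidef) : (ptraceB ρ).PosSemidef := by
  rw [ptraceB_eq_sum_submatrix]
  exact posSemidef_sum _ fun k _ => hρ.submatrix _

theorem ptraceA_posSemidef (hρ : ρ.PosSemidef) : (ptraceA ρ).PosSemidef := by
  rw [ptraceA_eq_sum_submatrix]
  exact posSemidef_sum _ fun k _ => hρ.submatrix _

variable (ρ)

theorem trace_ptraceB : (ptraceB ρ).trace = ρ.trace := by
  simp only [Matrix.trace, Matrix.diag_apply, ptraceB, Fintype.sum_prod_type]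

theorem trace_ptraceA : (ptraceA ρ).trace = ρ.trace := by
  simp only [Matrix.trace, Matrix.diag_apply, ptraceA, Fintype.sum_prod_type]
  exact Finset.sum_comm

end PartialTrace

theorem one_sub_linEntropy {n : Type*} [Fintype n] (σ : Matrix n n ℂ) :
    1 - linEntropy σ = ((σ * σ).trace).re :=
  sub_sub_cancel _ _

theorem linEntropy_nonneg {n : Type*} [Fintype n] {σ : Matrix n n ℂ} (hσ : σ.PosSemidef)
    (htr : σ.trace = 1) : 0 ≤ linEntropy σ := by
  have := hσ.re_trace_mul_self_le_sq
  simp only [RCLike.re_to_complex, htr, Complex.one_re, one_pow] at this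
  rw [linEntropy]
  linarith

/-- With `x, y, z` the purities of `ρ_A, ρ_B, ρ_AB`: the right-hand side equals
`1 - (√x + √y - 1) ^ 2`, and the hypotheses say `0 ≤ √x + √y - 1 ≤ √z`. -/
theorem one_sub_le_of_one_le_sqrt_add_sqrt_le {x y z : ℝ} (hx : 0 ≤ x) (hy : 0 ≤ y)
    (hz : 0 ≤ z) (hlow : 1 ≤ √x + √y) (hup : √x + √y ≤ 1 + √z) :
    1 - z ≤ (1 - x) + (1 - y) - 2 * (1 - √x) * (1 - √y) := by
  have hsq : (√x + √y - 1) ^ 2 ≤ √z ^ 2 := pow_le_pow_left₀ (by linarith) (by linarith) 2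
  rw [Real.sq_sqrt hz] at hsq
  nlinarith [Real.sq_sqrt hx, Real.sq_sqrt hy]

theorem audenaert_improved_subadditivity_general (dA dB : ℕ)
    (ρ : Matrix (Fin dA × Fin dB) (Fin dA × Fin dB) ℂ)
    (hρ : ρ.PosSemidef) (hρtr : ρ.trace = 1)
    (hAud : Real.sqrt (((ptraceB ρ * ptraceB ρ).trace).re)
        + Real.sqrt (((ptraceA ρ * ptraceA ρ).trace).re)
        ≤ 1 + Real.sqrt (((ρ * ρ).trace).re))
    (hpos : Real.sqrt (1 - linEntropy (ptraceB ρ))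
        + Real.sqrt (1 - linEntropy (ptraceA ρ)) ≥ 1) :
    linEntropy ρ ≤ linEntropy (ptraceB ρ) + linEntropy (ptraceA ρ)
      - 2 * (1 - Real.sqrt (1 - linEntropy (ptraceB ρ)))
        * (1 - Real.sqrt (1 - linEntropy (ptraceA ρ))) ∧
    linEntropy (ptraceB ρ) + linEntropy (ptraceA ρ)
      - 2 * (1 - Real.sqrt (1 - linEntropy (ptraceB ρ)))
        * (1 - Real.sqrt (1 - linEntropy (ptraceA ρ)))
      ≤ linEntropy (ptraceB ρ) + linEntropy (ptraceA ρ) := by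
  have hρA := ptraceB_posSemidef hρ
  have hρB := ptraceA_posSemidef hρ
  have htrA : (ptraceB ρ).trace = 1 := (trace_ptraceB ρ).trans hρtr
  have htrB : (ptraceA ρ).trace = 1 := (trace_ptraceA ρ).trans hρtr
  have hsqrtA : √(1 - linEntropy (ptraceB ρ)) ≤ 1 :=
    Real.sqrt_le_one.mpr (by linarith [linEntropy_nonneg hρA htrA])
  have hsqrtB : √(1 - linEntropy (ptraceA ρ)) ≤ 1 :=
    Real.sqrt_le_one.mpr (by linarith [linEntropy_nonneg hρB htrB])
  refine ⟨?_, sub_le_self _ ?_⟩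
  · simp only [one_sub_linEntropy] at hpos ⊢
    exact one_sub_le_of_one_le_sqrt_add_sqrt_le hρA.1.re_trace_mul_self_nonneg
      hρB.1.re_trace_mul_self_nonneg hρ.1.re_trace_mul_self_nonneg hpos hAud
  · have := mul_nonneg (sub_nonneg.mpr hsqrtA) (sub_nonneg.mpr hsqrtB)
    linarith

/-- Audenaert's Schatten-2-norm inequality
`‖ρ_A‖₂ + ‖ρ_B‖₂ ≤ 1 + ‖ρ_AB‖₂` together with `√(1-S_L(ρ_A)) + √(1-S_L(ρ_B)) ≥ 1`
implies `S_L(ρ_AB) ≤ S_L(ρ_A) + S_L(ρ_B) - 2(1-√(1-S_L(ρ_A)))(1-√(1-S_L(ρ_B)))`, and this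
right-hand side is at most `S_L(ρ_A) + S_L(ρ_B)`. -/
theorem audenaert_improved_subadditivity (dA dB : ℕ) (hA : 2 ≤ dA) (hB : 2 ≤ dB)
    (ρ : Matrix (Fin dA × Fin dB) (Fin dA × Fin dB) ℂ)
    (hρ : ρ.PosSemidef) (hρtr : ρ.trace = 1)
    (hAud : Real.sqrt (((ptraceB ρ * ptraceB ρ).trace).re)
        + Real.sqrt (((ptraceA ρ * ptraceA ρ).trace).re)
        ≤ 1 + Real.sqrt (((ρ * ρ).trace).re))
    (hpos : Real.sqrt (1 - linEntropy (ptraceB ρ))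
        + Real.sqrt (1 - linEntropy (ptraceA ρ)) ≥ 1) :
    linEntropy ρ ≤ linEntropy (ptraceB ρ) + linEntropy (ptraceA ρ)
      - 2 * (1 - Real.sqrt (1 - linEntropy (ptraceB ρ)))
        * (1 - Real.sqrt (1 - linEntropy (ptraceA ρ))) ∧
    linEntropy (ptraceB ρ) + linEntropy (ptraceA ρ)
      - 2 * (1 - Real.sqrt (1 - linEntropy (ptraceB ρ)))
        * (1 - Real.sqrt (1 - linEntropy (ptraceA ρ)))
      ≤ linEntropy (ptraceB ρ) + linEntropy (ptraceA ρ) :=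
  audenaert_improved_subadditivity_general dA dB ρ hρ hρtr hAud hpos
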